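/- Let $A=(a_j^i)$ be an $N\times n$ real matrix with columns $w_1,\dots,w_n$, let $1\le q<\infty$ and $0<\varepsilon<1$, and assume $|a_j^i|\le \varepsilon\,\|w_j\|_{\ell_q^N}$ for every $i\in\{1,\dots,N\}$ and $j\in\{1,\dots,n\}$. Then there exists a partition $\{1,\dots,N\}=\Omega_1\cup\Omega_2$, $\Omega_1\cap\Omega_2=\emptyset$, such that for $k=1,2$, $\|A(\Omega_k)\|_{(1,q)}\le \left(\frac{1+n\varepsilon^q}{2}\right)^{1/q}\|A\|_{(1,q)}$. -/

import Mathlib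

/-- The `(1,q)`-norm of the submatrix of the `N × n` real matrix `A` formed by the rows
with indices in `Ω`: `sup { (∑_{i ∈ Ω} |(Ax)ᵢ|^q)^(1/q) : ‖x‖_{ℓ₁ⁿ} ≤ 1 }`. -/
noncomputable def norm1q {N n : ℕ} (A : Matrix (Fin N) (Fin n) ℝ) (Ω : Finset (Fin N))
    (q : ℝ) : ℝ :=
  sSup {r : ℝ | ∃ x : Fin n → ℝ, (∑ j, |x j|) ≤ 1 ∧
    r = (∑ i ∈ Ω, |∑ j, A i j * x j| ^ q) ^ (1 / q)}

open Finset Filter Topology Matrix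

/-!
Both sides only see the columns: `‖A(Ω)‖_(1,q)` is the largest `ℓ_q`-norm of a column `w_j`
restricted to `Ω` (Minkowski for `≤`, unit vectors for `≥`). It therefore suffices to split the
rows so that each column keeps at most half of its mass `∑ᵢ |aⱼⁱ|^q`, up to an error
`n ε^q ‖A‖^q`. This is a discrepancy problem for `n` vectors with entries at most `ε^q ‖A‖^q`,
solved by Beck–Fiala rounding: an extreme point `y` of the compact polytope
`{y ∈ [-1,1]^N : ∑ᵢ yᵢ |aⱼⁱ|^q = 0 for all j}` has at most `n` coordinates in `(-1,1)`, since a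
kernel vector supported on them would move `y` both ways inside the polytope; rounding these
coordinates to `±1` changes each column sum by at most `n ε^q ‖A‖^q`.
-/

section Discrepancy

variable {ι κ : Type*} [Fintype ι] [Fintype κ]

lemma exists_ne_zero_vecMul_eq_zero_of_card_lt (B : Matrix ι κ ℝ) (F : Finset ι)
    (hF : Fintype.card κ < #F) :
    ∃ z : ι → ℝ, z ≠ 0 ∧ (∀ i ∉ F, z i = 0) ∧ z ᵥ* B = 0 := by
  let extend := Function.ExtendByZero.linearMap ℝ ((↑) : F → ι)
  have hker : LinearMap.ker (B.vecMulLinear ∘ₗ extend) ≠ ⊥ :=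
    LinearMap.ker_ne_bot_of_finrank_lt (by simpa using hF)
  obtain ⟨g, hg, hg0⟩ := Submodule.ne_bot_iff _ |>.mp hker
  refine ⟨extend g, ?_, fun i hi => ?_, hg⟩
  · exact fun h => hg0 <| funext fun i => by
      simpa [extend, Subtype.val_injective.extend_apply] using congrFun h i
  · exact Function.extend_apply' _ _ _ (by simpa using hi)

lemma eventually_abs_add_mul_le_one {y z : ι → ℝ} (h : ∀ i, z i ≠ 0 → |y i| < 1)
    (hy : ∀ i, |y i| ≤ 1) :
    ∀ᶠ t in 𝓝 (0 : ℝ), ∀ i, |y i + t * z i| ≤ 1 := by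
  refine eventually_all.mpr fun i => ?_
  by_cases hz : z i = 0
  · simp [hz, hy i]
  have hcont : Tendsto (fun t : ℝ => |y i + t * z i|) (𝓝 0) (𝓝 |y i|) :=
    (continuous_const.add (continuous_id.mul continuous_const)).abs.tendsto' 0 _ (by simp)
  exact (hcont.eventually (gt_mem_nhds (h i hz))).mono fun _ => le_of_lt

lemma card_abs_ne_one_le_of_mem_extremePoints (B : Matrix ι κ ℝ) {y : ι → ℝ}
    (hy : y ∈ {y : ι → ℝ | ‖y‖ ≤ 1 ∧ y ᵥ* B = 0}.extremePoints ℝ) :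
    #{i | |y i| ≠ 1} ≤ Fintype.card κ := by
  classical
  by_contra! hcard
  obtain ⟨⟨hy1, hyB⟩, hext⟩ := hy
  obtain ⟨z, hz0, hzF, hzB⟩ := exists_ne_zero_vecMul_eq_zero_of_card_lt B _ hcard
  have hnorm {w : ι → ℝ} : ‖w‖ ≤ 1 ↔ ∀ i, |w i| ≤ 1 := by
    simp [pi_norm_le_iff_of_nonneg zero_le_one]
  have hyi := hnorm.mp hy1
  have hfree_lt_one (w : ι → ℝ) (hw : ∀ i, w i ≠ 0 → z i ≠ 0) : ∀ i, w i ≠ 0 → |y i| < 1 := fun i hi =>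
    (hyi i).lt_of_ne fun h => hw i hi (hzF i (by simpa using h))
  have hsmall : ∀ᶠ t in 𝓝[≠] (0 : ℝ), t ≠ 0 ∧ (∀ i, |y i + t * z i| ≤ 1) ∧
      ∀ i, |y i + t * (-z) i| ≤ 1 :=
    eventually_mem_nhdsWithin.and <| nhdsWithin_le_nhds <|
      (eventually_abs_add_mul_le_one (hfree_lt_one z fun _ => id) hyi).and
      (eventually_abs_add_mul_le_one (hfree_lt_one (-z) fun _ h => by simpa using h) hyi)
  obtain ⟨t, ht0, hplus, hminus⟩ := hsmall.exists
  have hmem (w : ι → ℝ) (hw : ∀ i, |y i + t * w i| ≤ 1) (hwB : w ᵥ* B = 0) :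
      y + t • w ∈ {y : ι → ℝ | ‖y‖ ≤ 1 ∧ y ᵥ* B = 0} :=
    ⟨hnorm.mpr hw, by rw [add_vecMul, smul_vecMul, hyB, hwB, smul_zero, add_zero]⟩
  have hseg : y ∈ openSegment ℝ (y + t • z) (y + t • -z) :=
    ⟨1 / 2, 1 / 2, by norm_num, by norm_num, by norm_num, by module⟩
  have := hext (hmem z hplus hzB) (hmem (-z) hminus (by rw [neg_vecMul, hzB, neg_zero])) hseg
  exact hz0 ((smul_eq_zero.mp (add_eq_left.mp this)).resolve_left ht0)

lemma exists_finset_abs_sum_sub_sum_compl_le [DecidableEq ι] (B : Matrix ι κ ℝ) {c : ℝ}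
    (hc : 0 ≤ c) (hB : ∀ i k, |B i k| ≤ c) :
    ∃ S : Finset ι, ∀ k, |∑ i ∈ S, B i k - ∑ i ∈ Sᶜ, B i k| ≤ Fintype.card κ * c := by
  set P := {y : ι → ℝ | ‖y‖ ≤ 1 ∧ y ᵥ* B = 0}
  have hP : IsCompact P := Metric.isCompact_of_isClosed_isBounded
    ((isClosed_le continuous_norm continuous_const).inter
      (isClosed_eq (continuous_id.matrix_vecMul continuous_const) continuous_const))
    ((Metric.isBounded_closedBall (x := 0) (r := 1)).subset fun y hy => by simpa using hy.1)
  obtain ⟨y, hy⟩ := hP.extremePoints_nonempty ⟨0, by simp [P]⟩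
  have hyi : ∀ i, |y i| ≤ 1 := by simpa [pi_norm_le_iff_of_nonneg] using hy.1.1
  set θ : ι → ℝ := fun i => if 0 ≤ y i then 1 else -1
  have hθ_sub (i : ι) : |θ i - y i| ≤ 1 := by
    have := abs_le.mp (hyi i)
    simp only [θ]; split_ifs <;> rw [abs_le] <;> constructor <;> linarith
  have hθ_eq (i : ι) (h : |y i| = 1) : θ i = y i := by
    simp only [θ]; split_ifs <;> cases abs_eq (zero_le_one' ℝ) |>.mp h <;> linarith
  refine ⟨({i | 0 ≤ y i} : Finset ι), fun k => ?_⟩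
  have hyk : ∑ i, y i * B i k = 0 := congrFun hy.1.2 k
  calc |∑ i with 0 ≤ y i, B i k - ∑ i ∈ ({i | 0 ≤ y i} : Finset ι)ᶜ, B i k|
      = |∑ i, θ i * B i k| := by
        simp only [θ, ite_mul, one_mul, neg_one_mul, sum_ite, compl_filter, sum_neg_distrib,
          sub_eq_add_neg]
    _ = |∑ i, (θ i - y i) * B i k| := by simp only [sub_mul, sum_sub_distrib, hyk, sub_zero]
    _ ≤ ∑ i, |θ i - y i| * |B i k| := by
        simpa only [abs_mul] using abs_sum_le_sum_abs (fun i => (θ i - y i) * B i k) univ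
    _ ≤ ∑ i, if |y i| ≠ 1 then c else 0 := by
        gcongr with i
        split_ifs with h
        · exact mul_le_mul (hθ_sub i) (hB i k) (abs_nonneg _) zero_le_one |>.trans_eq (one_mul c)
        · simp [hθ_eq i (not_not.mp h)]
    _ = #{i | |y i| ≠ 1} * c := by rw [← sum_filter, sum_const, nsmul_eq_mul]
    _ ≤ Fintype.card κ * c := by
        gcongr
        exact card_abs_ne_one_le_of_mem_extremePoints B hy

lemma exists_finset_sum_le_half_add [DecidableEq ι] (B : Matrix ι κ ℝ) {c : ℝ} (hc : 0 ≤ c)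
    (hB : ∀ i k, |B i k| ≤ c) :
    ∃ S : Finset ι, ∀ k, ∑ i ∈ S, B i k ≤ (∑ i, B i k + Fintype.card κ * c) / 2 ∧
      ∑ i ∈ Sᶜ, B i k ≤ (∑ i, B i k + Fintype.card κ * c) / 2 := by
  obtain ⟨S, hS⟩ := exists_finset_abs_sum_sub_sum_compl_le B hc hB
  refine ⟨S, fun k => ?_⟩
  have := abs_le.mp (hS k)
  rw [← sum_add_sum_compl S]
  constructor <;> linarith

end Discrepancy

section ColumnNorm

variable {ι κ : Type*} (A : Matrix ι κ ℝ) (Ω : Finset ι) {q : ℝ}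

noncomputable def colNorm (q : ℝ) (j : κ) : ℝ := (∑ i ∈ Ω, |A i j| ^ q) ^ (1 / q)

lemma colNorm_nonneg (j : κ) : 0 ≤ colNorm A Ω q j := by
  unfold colNorm; positivity

lemma colNorm_rpow (hq : q ≠ 0) (j : κ) : colNorm A Ω q j ^ q = ∑ i ∈ Ω, |A i j| ^ q := by
  rw [colNorm, one_div, Real.rpow_inv_rpow (by positivity) hq]

lemma colNorm_le_of_sum_rpow_le (hq : 0 < q) {K M : ℝ} (hK : 0 ≤ K) (hM : 0 ≤ M) {j : κ}
    (h : ∑ i ∈ Ω, |A i j| ^ q ≤ K * M ^ q) : colNorm A Ω q j ≤ K ^ (1 / q) * M := by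
  calc colNorm A Ω q j ≤ (K * M ^ q) ^ (1 / q) := by
        unfold colNorm; gcongr
    _ = K ^ (1 / q) * M := by
        rw [Real.mul_rpow hK (by positivity), one_div, Real.rpow_rpow_inv hM hq.ne']

lemma Lp_sum_mul_le (hq : 1 ≤ q) (x : κ → ℝ) (s : Finset κ) :
    (∑ i ∈ Ω, |∑ j ∈ s, A i j * x j| ^ q) ^ (1 / q) ≤ ∑ j ∈ s, |x j| * colNorm A Ω q j := by
  have hq0 : q ≠ 0 := by positivity
  classical
  induction s using Finset.induction with
  | empty => simp [Real.zero_rpow hq0, Real.zero_rpow (inv_ne_zero hq0)]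
  | insert j s hj ih =>
    have hj_term : (∑ i ∈ Ω, |A i j * x j| ^ q) ^ (1 / q) = |x j| * colNorm A Ω q j := by
      simp only [abs_mul, Real.mul_rpow (abs_nonneg _) (abs_nonneg _), ← sum_mul]
      rw [Real.mul_rpow (by positivity) (by positivity), mul_comm, colNorm, one_div,
        Real.rpow_rpow_inv (abs_nonneg _) hq0]
    simp only [sum_insert hj]
    calc (∑ i ∈ Ω, |A i j * x j + ∑ j ∈ s, A i j * x j| ^ q) ^ (1 / q)
        ≤ (∑ i ∈ Ω, |A i j * x j| ^ q) ^ (1 / q) +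
            (∑ i ∈ Ω, |∑ j ∈ s, A i j * x j| ^ q) ^ (1 / q) := Real.Lp_add_le Ω _ _ hq
      _ ≤ |x j| * colNorm A Ω q j + ∑ j ∈ s, |x j| * colNorm A Ω q j := by
        rw [hj_term]; gcongr

end ColumnNorm

section Norm1q

variable {N n : ℕ} (A : Matrix (Fin N) (Fin n) ℝ) (Ω : Finset (Fin N)) {q : ℝ}

lemma norm1q_nonneg : 0 ≤ norm1q A Ω q :=
  Real.sSup_nonneg <| by rintro r ⟨x, -, rfl⟩; positivity

lemma Lp_sum_mul_le_of_colNorm_le (hq : 1 ≤ q) {x : Fin n → ℝ} (hx : ∑ j, |x j| ≤ 1) {D : ℝ}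
    (hD : 0 ≤ D) (h : ∀ j, colNorm A Ω q j ≤ D) :
    (∑ i ∈ Ω, |∑ j, A i j * x j| ^ q) ^ (1 / q) ≤ D :=
  calc (∑ i ∈ Ω, |∑ j, A i j * x j| ^ q) ^ (1 / q)
      ≤ ∑ j, |x j| * colNorm A Ω q j := Lp_sum_mul_le A Ω hq x univ
    _ ≤ ∑ j, |x j| * D := by gcongr with j; exact h j
    _ ≤ D := by rw [← sum_mul]; exact mul_le_of_le_one_left hD hx

lemma norm1q_le_of_colNorm_le (hq : 1 ≤ q) {D : ℝ} (hD : 0 ≤ D)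
    (h : ∀ j, colNorm A Ω q j ≤ D) : norm1q A Ω q ≤ D :=
  Real.sSup_le (by rintro r ⟨x, hx, rfl⟩; exact Lp_sum_mul_le_of_colNorm_le A Ω hq hx hD h) hD

lemma colNorm_le_norm1q (hq : 1 ≤ q) (j : Fin n) : colNorm A Ω q j ≤ norm1q A Ω q := by
  have hbdd : BddAbove {r : ℝ | ∃ x : Fin n → ℝ, (∑ j, |x j|) ≤ 1 ∧
      r = (∑ i ∈ Ω, |∑ j, A i j * x j| ^ q) ^ (1 / q)} := by
    refine ⟨∑ j, colNorm A Ω q j, ?_⟩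
    rintro r ⟨x, hx, rfl⟩
    exact Lp_sum_mul_le_of_colNorm_le A Ω hq hx (sum_nonneg fun j _ => colNorm_nonneg A Ω j)
      fun j => single_le_sum (fun j _ => colNorm_nonneg A Ω j) (mem_univ j)
  have hsingle : ∑ j', |(Pi.single j 1 : Fin n → ℝ) j'| = 1 := by
    rw [sum_eq_single j (fun j' _ hj' => by simp [hj']) (by simp)]; simp
  refine le_csSup hbdd ⟨Pi.single j 1, hsingle.le, ?_⟩
  simp [colNorm, Pi.single_apply]

end Norm1q

theorem statement5_general (N n : ℕ) (A : Matrix (Fin N) (Fin n) ℝ) (q ε : ℝ)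
    (hq : 1 ≤ q) (hε : 0 < ε)
    (hA : ∀ (i : Fin N) (j : Fin n), |A i j| ≤ ε * (∑ i', |A i' j| ^ q) ^ (1 / q)) :
    ∃ Ω₁ Ω₂ : Finset (Fin N), Ω₁ ∪ Ω₂ = Finset.univ ∧ Ω₁ ∩ Ω₂ = ∅ ∧
      ∀ Ω ∈ ({Ω₁, Ω₂} : Set (Finset (Fin N))),
        norm1q A Ω q ≤ ((1 + n * ε ^ q) / 2) ^ (1 / q) * norm1q A Finset.univ q := by
  have hq0 : 0 < q := by positivity
  set M := norm1q A univ q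
  have hM : 0 ≤ M := norm1q_nonneg A univ
  have hcol (j : Fin n) : ∑ i, |A i j| ^ q ≤ M ^ q := by
    rw [← colNorm_rpow A univ hq0.ne']
    gcongr
    exacts [colNorm_nonneg A univ j, colNorm_le_norm1q A univ hq j]
  have hentry (i : Fin N) (j : Fin n) : |(|A i j| ^ q)| ≤ ε ^ q * M ^ q :=
    calc |(|A i j| ^ q)| = |A i j| ^ q := abs_of_nonneg (by positivity)
      _ ≤ (ε * colNorm A univ q j) ^ q := by gcongr; exact hA i j
      _ = ε ^ q * ∑ i, |A i j| ^ q := by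
        rw [Real.mul_rpow hε.le (colNorm_nonneg A univ j), colNorm_rpow A univ hq0.ne']
      _ ≤ ε ^ q * M ^ q := by gcongr; exact hcol j
  obtain ⟨S, hS⟩ := exists_finset_sum_le_half_add (fun i j => |A i j| ^ q) (by positivity) hentry
  refine ⟨S, Sᶜ, union_compl S, inter_compl S, ?_⟩
  have hbound (Ω : Finset (Fin N)) (hΩ : ∀ j, ∑ i ∈ Ω, |A i j| ^ q ≤
      (∑ i, |A i j| ^ q + Fintype.card (Fin n) * (ε ^ q * M ^ q)) / 2) :
      norm1q A Ω q ≤ ((1 + n * ε ^ q) / 2) ^ (1 / q) * M := by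
    refine norm1q_le_of_colNorm_le A Ω hq (by positivity) fun j =>
      colNorm_le_of_sum_rpow_le A Ω hq0 (by positivity) hM ?_
    have := hΩ j
    rw [Fintype.card_fin] at this
    linarith [hcol j]
  rintro Ω (rfl | rfl)
  exacts [hbound _ fun j => (hS j).1, hbound _ fun j => (hS j).2]

/-- Let `A = (aⱼⁱ)` be an `N × n` real matrix with columns `w₁, …, w_n`, let `1 ≤ q < ∞` and
`0 < ε < 1`, and assume `|aⱼⁱ| ≤ ε ‖wⱼ‖_{ℓ_q^N}` for every `i` and `j`. Then there exists a
partition `{1, …, N} = Ω₁ ∪ Ω₂`, `Ω₁ ∩ Ω₂ = ∅`, such that for `k = 1, 2`,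
`‖A(Ω_k)‖_(1,q) ≤ ((1 + n ε^q)/2)^(1/q) ‖A‖_(1,q)`. -/
theorem statement5 (N n : ℕ) (A : Matrix (Fin N) (Fin n) ℝ) (q ε : ℝ)
    (hq : 1 ≤ q) (hε : 0 < ε) (hε' : ε < 1)
    (hA : ∀ (i : Fin N) (j : Fin n), |A i j| ≤ ε * (∑ i', |A i' j| ^ q) ^ (1 / q)) :
    ∃ Ω₁ Ω₂ : Finset (Fin N), Ω₁ ∪ Ω₂ = Finset.univ ∧ Ω₁ ∩ Ω₂ = ∅ ∧
      ∀ Ω ∈ ({Ω₁, Ω₂} : Set (Finset (Fin N))),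
        norm1q A Ω q ≤ ((1 + n * ε ^ q) / 2) ^ (1 / q) * norm1q A Finset.univ q :=
  statement5_general N n A q ε hq hε hA
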